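/- For a convex set K ⊂ R^n, any ε > 0, and any μ,ν ∈ K, the local Gaussian widths satisfy |w_μ(ε) − w_ν(ε)| ≤ ‖μ−ν‖·(w_μ(ε) ∧ w_ν(ε))/ε ≤ √n·‖μ−ν‖. In particular ν ↦ w_ν(ε) is √n-Lipschitz on K. -/

import Mathlib

/-!
Shrinking `B(μ,ε) ∩ K` towards `ν` by the factor `ε / (‖μ - ν‖ + ε)` lands inside `B(ν,ε) ∩ K`
(convexity plus the triangle inequality). Since every linear functional `⟨ξ, v⟩` of the standard
Gaussian is centred, translating by a multiple of `ν` does not change the expected supremum, so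
`ε / (‖μ - ν‖ + ε) · w_μ(ε) ≤ w_ν(ε)`, and symmetrically. Rearranging these two inequalities,
using `w ≥ 0`, gives the first bound. The second follows from
`w_μ(ε) ≤ w(B(μ,ε)) = ε 𝔼‖ξ‖ ≤ ε √(𝔼‖ξ‖²) = ε √n`.
-/

open MeasureTheory Metric

noncomputable def stdGaussian (ι : Type*) [Fintype ι] : Measure (EuclideanSpace ℝ ι) :=
  (Measure.pi fun _ : ι => ProbabilityTheory.gaussianReal 0 1).map
    (MeasurableEquiv.toLp 2 (ι → ℝ))

noncomputable def gaussianWidth {ι : Type*} [Fintype ι] (T : Set (EuclideanSpace ℝ ι)) : ℝ :=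
  ∫ x, sSup ((fun t => (inner ℝ x t : ℝ)) '' T) ∂(stdGaussian ι)

/-- the local Gaussian width `w_μ(ε) = w(B(μ,ε) ∩ K)` -/
noncomputable def locWidth {ι : Type*} [Fintype ι] (K : Set (EuclideanSpace ℝ ι))
    (μ : EuclideanSpace ℝ ι) (ε : ℝ) : ℝ :=
  gaussianWidth (closedBall μ ε ∩ K)

open scoped RealInnerProductSpace NNReal

section SupportFunction

variable {E : Type*} [NormedAddCommGroup E] [InnerProductSpace ℝ E] {T : Set E}

lemma bddAbove_inner_image (hT : Bornology.IsBounded T) (x : E) :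
    BddAbove ((⟪x, ·⟫) '' T) := by
  obtain ⟨R, hR⟩ := hT.exists_norm_le
  refine ⟨‖x‖ * R, ?_⟩
  rintro _ ⟨t, ht, rfl⟩
  exact (real_inner_le_norm x t).trans (by gcongr; exact hR t ht)

lemma inner_le_sSup_inner_image (hT : Bornology.IsBounded T) {t : E} (ht : t ∈ T) (x : E) :
    ⟪x, t⟫ ≤ sSup ((⟪x, ·⟫) '' T) :=
  le_csSup (bddAbove_inner_image hT x) (Set.mem_image_of_mem _ ht)

lemma lipschitzWith_sSup_inner_image {R : ℝ≥0} (hne : T.Nonempty) (hT : ∀ t ∈ T, ‖t‖ ≤ R) :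
    LipschitzWith R fun x : E => sSup ((⟪x, ·⟫) '' T) := by
  have hbdd : Bornology.IsBounded T := isBounded_iff_forall_norm_le.2 ⟨R, hT⟩
  refine LipschitzWith.of_le_add_mul R fun x y => csSup_le (hne.image _) ?_
  rintro _ ⟨t, ht, rfl⟩
  calc ⟪x, t⟫ = ⟪y, t⟫ + ⟪x - y, t⟫ := by rw [inner_sub_left]; ring
    _ ≤ sSup ((⟪y, ·⟫) '' T) + R * dist x y := by
      gcongr
      · exact inner_le_sSup_inner_image hbdd ht y
      · rw [dist_eq_norm, mul_comm]
        exact (real_inner_le_norm _ t).trans (by gcongr; exact hT t ht)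

lemma integrable_sSup_inner_image [MeasurableSpace E] [BorelSpace E] {P : Measure E}
    [IsFiniteMeasure P] (hP : Integrable (‖·‖) P) (hne : T.Nonempty)
    (hT : Bornology.IsBounded T) :
    Integrable (fun x => sSup ((⟪x, ·⟫) '' T)) P := by
  obtain ⟨R, hR⟩ := hT.exists_norm_le
  have hlip := lipschitzWith_sSup_inner_image (R := R.toNNReal) hne
    fun t ht => (hR t ht).trans (Real.le_coe_toNNReal R)
  refine (hP.const_mul R.toNNReal).mono' hlip.continuous.aestronglyMeasurable
    (.of_forall fun x => ?_)
  simpa [hne.image_const, Real.dist_eq] using hlip.dist_le_mul x 0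

end SupportFunction

namespace ProbabilityTheory

variable {E : Type*} [NormedAddCommGroup E] [InnerProductSpace ℝ E] [FiniteDimensional ℝ E]
  [MeasurableSpace E] [BorelSpace E]

lemma integral_inner_sq_stdGaussian (v : E) :
    ∫ x, ⟪v, x⟫ ^ 2 ∂(stdGaussian E) = ‖v‖ ^ 2 := by
  rw [← innerSL_apply_norm ℝ v, ← variance_dual_stdGaussian,
    variance_of_integral_eq_zero (by fun_prop) (integral_strongDual_stdGaussian _)]
  rfl

lemma integral_norm_sq_stdGaussian :
    ∫ x, ‖x‖ ^ 2 ∂(stdGaussian E) = Module.finrank ℝ E := by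
  let b := stdOrthonormalBasis ℝ E
  simp_rw [← b.sum_sq_inner_right]
  rw [integral_finsetSum _ fun i _ => ?_]
  · simp [integral_inner_sq_stdGaussian, b.orthonormal.1]
  · exact (IsGaussian.memLp_dual _ (innerSL ℝ (b i)) 2 (by simp)).integrable_sq

lemma integral_norm_stdGaussian_le :
    ∫ x, ‖x‖ ∂(stdGaussian E) ≤ √(Module.finrank ℝ E) := by
  have hL2 : MemLp (fun x : E => ‖x‖) 2 (stdGaussian E) := IsGaussian.memLp_two_id.norm
  have hvar := variance_nonneg (fun x : E => ‖x‖) (stdGaussian E)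
  rw [variance_eq_sub hL2] at hvar
  simp only [Pi.pow_apply, integral_norm_sq_stdGaussian] at hvar
  exact Real.le_sqrt_of_sq_le (by linarith)

end ProbabilityTheory

section GaussianWidth

lemma stdGaussian_eq (ι : Type*) [Fintype ι] :
    stdGaussian ι = ProbabilityTheory.stdGaussian (EuclideanSpace ℝ ι) :=
  ProbabilityTheory.map_pi_eq_stdGaussian

instance isProbabilityMeasure_stdGaussian (ι : Type*) [Fintype ι] :
    IsProbabilityMeasure (stdGaussian ι) := by
  rw [stdGaussian_eq]
  infer_instance

variable {ι : Type*} [Fintype ι] {T S : Set (EuclideanSpace ℝ ι)}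

lemma integrable_norm_stdGaussian :
    Integrable (‖·‖) (stdGaussian ι) := by
  rw [stdGaussian_eq]
  exact ProbabilityTheory.IsGaussian.integrable_id.norm

lemma integrable_inner_stdGaussian (v : EuclideanSpace ℝ ι) :
    Integrable (⟪·, v⟫) (stdGaussian ι) := by
  rw [stdGaussian_eq]
  simpa [real_inner_comm] using ProbabilityTheory.IsGaussian.integrable_dual _ (innerSL ℝ v)

lemma integral_inner_stdGaussian (v : EuclideanSpace ℝ ι) :
    ∫ x, ⟪x, v⟫ ∂(stdGaussian ι) = 0 := by
  rw [stdGaussian_eq]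
  simpa [real_inner_comm] using ProbabilityTheory.integral_strongDual_stdGaussian (innerSL ℝ v)

lemma gaussianWidth_nonneg (hne : T.Nonempty) (hT : Bornology.IsBounded T) :
    0 ≤ gaussianWidth T := by
  obtain ⟨t, ht⟩ := hne
  calc 0 = ∫ x, ⟪x, t⟫ ∂(stdGaussian ι) := (integral_inner_stdGaussian t).symm
    _ ≤ gaussianWidth T :=
      integral_mono (integrable_inner_stdGaussian t)
        (integrable_sSup_inner_image integrable_norm_stdGaussian ⟨t, ht⟩ hT)
        (inner_le_sSup_inner_image hT ht)

lemma gaussianWidth_le_of_subset_closedBall {μ : EuclideanSpace ℝ ι} {ε : ℝ}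
    (hne : T.Nonempty) (hT : T ⊆ closedBall μ ε) :
    gaussianWidth T ≤ ε * √(Fintype.card ι) := by
  have hbdd : Bornology.IsBounded T := isBounded_closedBall.subset hT
  have hpt (x : EuclideanSpace ℝ ι) : sSup ((⟪x, ·⟫) '' T) ≤ ⟪x, μ⟫ + ε * ‖x‖ := by
    refine csSup_le (hne.image _) ?_
    rintro _ ⟨t, ht, rfl⟩
    calc ⟪x, t⟫ = ⟪x, μ⟫ + ⟪x, t - μ⟫ := by rw [inner_sub_right]; ring
      _ ≤ ⟪x, μ⟫ + ‖x‖ * ‖t - μ‖ := by gcongr; exact real_inner_le_norm x _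
      _ ≤ ⟪x, μ⟫ + ε * ‖x‖ := by
        rw [mul_comm]; gcongr; exact mem_closedBall_iff_norm.1 (hT ht)
  have hε : 0 ≤ ε := by obtain ⟨t, ht⟩ := hne; exact dist_nonneg.trans (hT ht)
  calc gaussianWidth T ≤ ∫ x, ⟪x, μ⟫ + ε * ‖x‖ ∂(stdGaussian ι) :=
        integral_mono (integrable_sSup_inner_image integrable_norm_stdGaussian hne hbdd)
          ((integrable_inner_stdGaussian μ).add (integrable_norm_stdGaussian.const_mul ε)) hpt
    _ = ε * ∫ x, ‖x‖ ∂(stdGaussian ι) := by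
      rw [integral_add (integrable_inner_stdGaussian μ)
        (integrable_norm_stdGaussian.const_mul ε), integral_inner_stdGaussian,
        integral_const_mul, zero_add]
    _ ≤ ε * √(Fintype.card ι) := by
      gcongr
      simpa [stdGaussian_eq ι] using ProbabilityTheory.integral_norm_stdGaussian_le
        (E := EuclideanSpace ℝ ι)

lemma mul_gaussianWidth_le {a : ℝ} {v : EuclideanSpace ℝ ι} (ha : 0 < a) (hne : T.Nonempty)
    (hT : Bornology.IsBounded T) (hS : Bornology.IsBounded S) (hTS : ∀ t ∈ T, a • t + v ∈ S) :
    a * gaussianWidth T ≤ gaussianWidth S := by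
  have hpt (x : EuclideanSpace ℝ ι) :
      a * sSup ((⟪x, ·⟫) '' T) + ⟪x, v⟫ ≤ sSup ((⟪x, ·⟫) '' S) := by
    rw [← le_sub_iff_add_le, mul_comm, ← le_div_iff₀ ha]
    refine csSup_le (hne.image _) ?_
    rintro _ ⟨t, ht, rfl⟩
    rw [le_div_iff₀ ha, le_sub_iff_add_le]
    calc ⟪x, t⟫ * a + ⟪x, v⟫ = ⟪x, a • t + v⟫ := by
          rw [inner_add_right, real_inner_smul_right, mul_comm]
      _ ≤ sSup ((⟪x, ·⟫) '' S) := inner_le_sSup_inner_image hS (hTS t ht) x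
  obtain ⟨t₀, ht₀⟩ := hne
  have hTint := integrable_sSup_inner_image integrable_norm_stdGaussian ⟨t₀, ht₀⟩ hT
  have hSint := integrable_sSup_inner_image integrable_norm_stdGaussian ⟨_, hTS t₀ ht₀⟩ hS
  calc a * gaussianWidth T
      = ∫ x, a * sSup ((⟪x, ·⟫) '' T) + ⟪x, v⟫ ∂(stdGaussian ι) := by
        rw [integral_add (hTint.const_mul a) (integrable_inner_stdGaussian v),
          integral_inner_stdGaussian, add_zero, integral_const_mul, gaussianWidth]
    _ ≤ gaussianWidth S :=
        integral_mono ((hTint.const_mul a).add (integrable_inner_stdGaussian v)) hSint hpt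

end GaussianWidth

section ClosedBallInter

variable {X : Type*} [PseudoMetricSpace X] {K : Set X} {μ : X} {ε : ℝ}

lemma nonempty_closedBall_inter (hε : 0 ≤ ε) (hμ : μ ∈ K) : (closedBall μ ε ∩ K).Nonempty :=
  ⟨μ, mem_closedBall_self hε, hμ⟩

lemma isBounded_closedBall_inter : Bornology.IsBounded (closedBall μ ε ∩ K) :=
  isBounded_closedBall.subset Set.inter_subset_left

end ClosedBallInter

section ConvexClosedBallInter

variable {E : Type*} [NormedAddCommGroup E] [NormedSpace ℝ E] {K : Set E} {μ ν x : E} {ε : ℝ}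

lemma Convex.smul_add_smul_mem_closedBall_inter (hK : Convex ℝ K) (hν : ν ∈ K) (hε : 0 < ε)
    (hx : x ∈ closedBall μ ε ∩ K) :
    (ε / (‖μ - ν‖ + ε)) • x + (‖μ - ν‖ / (‖μ - ν‖ + ε)) • ν ∈ closedBall ν ε ∩ K := by
  set d := ‖μ - ν‖
  have hdε : 0 < d + ε := by positivity
  have hsum : ε / (d + ε) + d / (d + ε) = 1 := by field_simp; ring
  refine ⟨?_, hK hx.2 hν (by positivity) (by positivity) hsum⟩
  rw [mem_closedBall_iff_norm, eq_sub_iff_add_eq'.2 hsum]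
  calc ‖(ε / (d + ε)) • x + (1 - ε / (d + ε)) • ν - ν‖
        = ε / (d + ε) * ‖(x - μ) + (μ - ν)‖ := by
        rw [← norm_smul_of_nonneg (by positivity)]
        congr 1
        module
    _ ≤ ε / (d + ε) * (ε + d) := by
        gcongr
        exact (norm_add_le _ _).trans (by gcongr; exact mem_closedBall_iff_norm.1 hx.1)
    _ = ε := by field_simp; ring

end ConvexClosedBallInter

section LocWidth

variable {ι : Type*} [Fintype ι] {K : Set (EuclideanSpace ℝ ι)} {μ ν : EuclideanSpace ℝ ι}
  {ε : ℝ}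

lemma locWidth_nonneg (hε : 0 ≤ ε) (hμ : μ ∈ K) : 0 ≤ locWidth K μ ε :=
  gaussianWidth_nonneg (nonempty_closedBall_inter hε hμ) isBounded_closedBall_inter

lemma locWidth_le_mul_sqrt (hε : 0 ≤ ε) (hμ : μ ∈ K) :
    locWidth K μ ε ≤ ε * √(Fintype.card ι) :=
  gaussianWidth_le_of_subset_closedBall (nonempty_closedBall_inter hε hμ) Set.inter_subset_left

lemma div_mul_locWidth_le_locWidth (hK : Convex ℝ K) (hε : 0 < ε) (hμ : μ ∈ K) (hν : ν ∈ K) :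
    ε / (‖μ - ν‖ + ε) * locWidth K μ ε ≤ locWidth K ν ε :=
  mul_gaussianWidth_le (by positivity) (nonempty_closedBall_inter hε.le hμ)
    isBounded_closedBall_inter isBounded_closedBall_inter
    fun _ hx => hK.smul_add_smul_mem_closedBall_inter hν hε hx

end LocWidth

lemma abs_sub_le_mul_min_div {d ε a b : ℝ} (hd : 0 ≤ d) (hε : 0 < ε) (ha : 0 ≤ a) (hb : 0 ≤ b)
    (hab : ε / (d + ε) * a ≤ b) (hba : ε / (d + ε) * b ≤ a) :
    |a - b| ≤ d * min a b / ε := by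
  have hdε : 0 < d + ε := by positivity
  rw [div_mul_eq_mul_div, div_le_iff₀ hdε] at hab hba
  rw [abs_sub_le_iff, le_div_iff₀ hε, le_div_iff₀ hε]
  rcases le_total a b with h | h
  · rw [min_eq_left h]; constructor <;> nlinarith
  · rw [min_eq_right h]; constructor <;> nlinarith

/-- for a convex `K ⊂ ℝⁿ`, any `ε > 0` and `μ, ν ∈ K`:
`|w_μ(ε) − w_ν(ε)| ≤ ‖μ−ν‖·(w_μ(ε) ∧ w_ν(ε))/ε ≤ √n·‖μ−ν‖`; in particular
`ν ↦ w_ν(ε)` is `√n`-Lipschitz on `K`. -/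
theorem stmt_2 {n : ℕ} (K : Set (EuclideanSpace ℝ (Fin n))) (hKconv : Convex ℝ K)
    (ε : ℝ) (hε : 0 < ε)
    (μ ν : EuclideanSpace ℝ (Fin n)) (hμ : μ ∈ K) (hν : ν ∈ K) :
    |locWidth K μ ε - locWidth K ν ε| ≤ ‖μ - ν‖ * min (locWidth K μ ε) (locWidth K ν ε) / ε ∧
      ‖μ - ν‖ * min (locWidth K μ ε) (locWidth K ν ε) / ε ≤ Real.sqrt n * ‖μ - ν‖ := by
  have hμν := div_mul_locWidth_le_locWidth hKconv hε hμ hν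
  have hνμ := div_mul_locWidth_le_locWidth hKconv hε hν hμ
  rw [norm_sub_rev] at hνμ
  refine ⟨abs_sub_le_mul_min_div (norm_nonneg _) hε (locWidth_nonneg hε.le hμ)
    (locWidth_nonneg hε.le hν) hμν hνμ, ?_⟩
  have hmin : min (locWidth K μ ε) (locWidth K ν ε) ≤ ε * √n := by
    simpa using (min_le_left _ _).trans (locWidth_le_mul_sqrt hε.le hμ)
  calc ‖μ - ν‖ * min (locWidth K μ ε) (locWidth K ν ε) / ε ≤ ‖μ - ν‖ * (ε * √n) / ε := by
        gcongr
    _ = √n * ‖μ - ν‖ := by field_simp
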